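/- The function F(x,y,y₁,y₂,y₃,y₄) = y₄^{5/4}, which is smooth on the open set U = {(x,y,y₁,y₂,y₃,y₄) ∈ ℝ⁶ : y₄ > 0}, satisfies the three Wünschmann conditions (W1), (W2), (W3) at every point of U. -/
import Mathlib


/-- Partial derivative of `G : ℝ⁶ → ℝ` in the `i`-th coordinate direction.
Coordinates: `p 0 = x`, `p 1 = y`, `p 2 = y₁`, `p 3 = y₂`, `p 4 = y₃`, `p 5 = y₄`. -/
noncomputable def pd (i : Fin 6) (G : (Fin 6 → ℝ) → ℝ) (p : Fin 6 → ℝ) : ℝ :=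
  fderiv ℝ G p (Pi.single i 1)

/-- The total derivative `𝒟G = Gₓ + y₁G_y + y₂G_{y₁} + y₃G_{y₂} + y₄G_{y₃} + F·G_{y₄}`. -/
noncomputable def Dt (F G : (Fin 6 → ℝ) → ℝ) : (Fin 6 → ℝ) → ℝ := fun p =>
  pd 0 G p + p 2 * pd 1 G p + p 3 * pd 2 G p + p 4 * pd 3 G p + p 5 * pd 4 G p
    + F p * pd 5 G p

/-- First Wünschmann condition:
`50𝒟²F₄ − 75𝒟F₃ + 50F₂ − 60F₄𝒟F₄ + 30F₃F₄ + 8F₄³ = 0`. -/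
def Wuensch1 (F : (Fin 6 → ℝ) → ℝ) (p : Fin 6 → ℝ) : Prop :=
  50 * Dt F (Dt F (pd 5 F)) p - 75 * Dt F (pd 4 F) p + 50 * pd 3 F p
    - 60 * pd 5 F p * Dt F (pd 5 F) p + 30 * pd 4 F p * pd 5 F p
    + 8 * (pd 5 F p) ^ 3 = 0

/-- Second Wünschmann condition:
`375𝒟²F₃ − 1000𝒟F₂ + 350(𝒟F₄)² + 1250F₁ − 650F₃𝒟F₄ + 200F₃² − 150F₄𝒟F₃ + 200F₂F₄`
`− 140F₄²𝒟F₄ + 130F₃F₄² + 14F₄⁴ = 0`. -/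
def Wuensch2 (F : (Fin 6 → ℝ) → ℝ) (p : Fin 6 → ℝ) : Prop :=
  375 * Dt F (Dt F (pd 4 F)) p - 1000 * Dt F (pd 3 F) p + 350 * (Dt F (pd 5 F) p) ^ 2
    + 1250 * pd 2 F p - 650 * pd 4 F p * Dt F (pd 5 F) p + 200 * (pd 4 F p) ^ 2
    - 150 * pd 5 F p * Dt F (pd 4 F) p + 200 * pd 3 F p * pd 5 F p
    - 140 * (pd 5 F p) ^ 2 * Dt F (pd 5 F) p + 130 * pd 4 F p * (pd 5 F p) ^ 2
    + 14 * (pd 5 F p) ^ 4 = 0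

/-- Third Wünschmann condition:
`1250𝒟²F₂ − 6250𝒟F₁ + 1750(𝒟F₃)(𝒟F₄) − 2750F₂𝒟F₄ − 875F₃𝒟F₃ + 1250F₂F₃ − 500F₄𝒟F₂`
`+ 700F₄(𝒟F₄)² + 1250F₁F₄ − 1050F₃F₄𝒟F₄ + 350F₃²F₄ − 350F₄²𝒟F₃ + 550F₂F₄²`
`− 280F₄³𝒟F₄ + 210F₃F₄³ + 28F₄⁵ + 18750F_y = 0`. -/
def Wuensch3 (F : (Fin 6 → ℝ) → ℝ) (p : Fin 6 → ℝ) : Prop :=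
  1250 * Dt F (Dt F (pd 3 F)) p - 6250 * Dt F (pd 2 F) p
    + 1750 * Dt F (pd 4 F) p * Dt F (pd 5 F) p - 2750 * pd 3 F p * Dt F (pd 5 F) p
    - 875 * pd 4 F p * Dt F (pd 4 F) p + 1250 * pd 3 F p * pd 4 F p
    - 500 * pd 5 F p * Dt F (pd 3 F) p + 700 * pd 5 F p * (Dt F (pd 5 F) p) ^ 2
    + 1250 * pd 2 F p * pd 5 F p - 1050 * pd 4 F p * pd 5 F p * Dt F (pd 5 F) p
    + 350 * (pd 4 F p) ^ 2 * pd 5 F p - 350 * (pd 5 F p) ^ 2 * Dt F (pd 4 F) p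
    + 550 * pd 3 F p * (pd 5 F p) ^ 2 - 280 * (pd 5 F p) ^ 3 * Dt F (pd 5 F) p
    + 210 * pd 4 F p * (pd 5 F p) ^ 3 + 28 * (pd 5 F p) ^ 5
    + 18750 * pd 1 F p = 0

/-- The defining function `F = y₄^{5/4}`. -/
noncomputable def F54 : (Fin 6 → ℝ) → ℝ := fun p => (p 5) ^ ((5 : ℝ) / 4)


open Filter

lemma hasFDerivAt_cr (c r : ℝ) (p : Fin 6 → ℝ) (hp : p 5 ≠ 0) :
    HasFDerivAt (fun q : Fin 6 → ℝ => c * (q 5) ^ r)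
      ((c * (r * (p 5) ^ (r - 1))) •
        (ContinuousLinearMap.proj (R := ℝ) (φ := fun _ : Fin 6 => ℝ) 5)) p := by
  have h1 : HasFDerivAt (fun q : Fin 6 → ℝ => q 5)
      (ContinuousLinearMap.proj (R := ℝ) (φ := fun _ : Fin 6 => ℝ) 5) p :=
    (ContinuousLinearMap.proj (R := ℝ) (φ := fun _ : Fin 6 => ℝ) 5).hasFDerivAt
  have h2 : HasDerivAt (fun x : ℝ => x ^ r) (r * (p 5) ^ (r - 1)) (p 5) :=
    Real.hasDerivAt_rpow_const (Or.inl hp)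
  have h4 := (h2.comp_hasFDerivAt p h1).const_mul c
  rwa [smul_smul] at h4

lemma pd_cr (c r : ℝ) (i : Fin 6) (p : Fin 6 → ℝ) (hp : p 5 ≠ 0) :
    pd i (fun q => c * (q 5) ^ r) p
      = c * (r * (p 5) ^ (r - 1)) * ((Pi.single i (1:ℝ) : Fin 6 → ℝ) 5) := by
  unfold pd
  rw [(hasFDerivAt_cr c r p hp).fderiv]
  simp

lemma Dt_cr (c r : ℝ) (q : Fin 6 → ℝ) (hq : 0 < q 5) :
    Dt F54 (fun q' => c * (q' 5) ^ r) q = (c * r) * (q 5) ^ (r + 1/4) := by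
  unfold Dt
  rw [pd_cr c r 0 q hq.ne', pd_cr c r 1 q hq.ne', pd_cr c r 2 q hq.ne',
    pd_cr c r 3 q hq.ne', pd_cr c r 4 q hq.ne', pd_cr c r 5 q hq.ne']
  norm_num [Pi.single_apply, F54,
    show ((5:Fin 6)=0) = False from by decide, show ((5:Fin 6)=1) = False from by decide,
    show ((5:Fin 6)=2) = False from by decide, show ((5:Fin 6)=3) = False from by decide,
    show ((5:Fin 6)=4) = False from by decide]
  rw [show r + 1/4 = 5/4 + (r-1) by ring, Real.rpow_add hq]
  ring

lemma Dt_zero (F : (Fin 6 → ℝ) → ℝ) (p : Fin 6 → ℝ) : Dt F (fun _ => (0:ℝ)) p = 0 := by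
  unfold Dt pd
  simp

lemma Dt_congr {F G H : (Fin 6 → ℝ) → ℝ} {p : Fin 6 → ℝ} (h : G =ᶠ[nhds p] H) :
    Dt F G p = Dt F H p := by
  unfold Dt pd
  rw [h.fderiv_eq]

lemma ev_pos (q : Fin 6 → ℝ) (hq : 0 < q 5) : ∀ᶠ q' in nhds q, 0 < q' 5 :=
  (continuous_apply 5).continuousAt (Ioi_mem_nhds hq)

lemma eF54 : F54 = fun q : Fin 6 → ℝ => 1 * (q 5) ^ ((5:ℝ)/4) := by
  funext q; simp [F54]

lemma pd5_F54 (q : Fin 6 → ℝ) (hq : 0 < q 5) :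
    pd 5 F54 q = (5/4 : ℝ) * (q 5) ^ ((1:ℝ)/4) := by
  rw [eF54, pd_cr 1 (5/4) 5 q hq.ne']
  norm_num [Pi.single_apply]

lemma pdi_F54 (i : Fin 6) (h5 : (5:Fin 6) ≠ i) (q : Fin 6 → ℝ) (hq : 0 < q 5) :
    pd i F54 q = 0 := by
  rw [eF54, pd_cr 1 (5/4) i q hq.ne']
  simp [Pi.single_apply, h5]

lemma e_pd5 (q : Fin 6 → ℝ) (hq : 0 < q 5) :
    pd 5 F54 =ᶠ[nhds q] fun q' => (5/4 : ℝ) * (q' 5) ^ ((1:ℝ)/4) := by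
  filter_upwards [ev_pos q hq] with q' h using pd5_F54 q' h

lemma e_pdi (i : Fin 6) (h5 : (5:Fin 6) ≠ i) (q : Fin 6 → ℝ) (hq : 0 < q 5) :
    pd i F54 =ᶠ[nhds q] fun _ => (0:ℝ) := by
  filter_upwards [ev_pos q hq] with q' h using pdi_F54 i h5 q' h

lemma DF4 (q : Fin 6 → ℝ) (hq : 0 < q 5) :
    Dt F54 (pd 5 F54) q = (5/16 : ℝ) * (q 5) ^ ((1:ℝ)/2) := by
  rw [Dt_congr (e_pd5 q hq), Dt_cr (5/4) (1/4) q hq]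
  norm_num

lemma e_DF4 (q : Fin 6 → ℝ) (hq : 0 < q 5) :
    Dt F54 (pd 5 F54) =ᶠ[nhds q] fun q' => (5/16 : ℝ) * (q' 5) ^ ((1:ℝ)/2) := by
  filter_upwards [ev_pos q hq] with q' h using DF4 q' h

lemma DDF4 (q : Fin 6 → ℝ) (hq : 0 < q 5) :
    Dt F54 (Dt F54 (pd 5 F54)) q = (5/32 : ℝ) * (q 5) ^ ((3:ℝ)/4) := by
  rw [Dt_congr (e_DF4 q hq), Dt_cr (5/16) (1/2) q hq]
  norm_num

lemma DFi (i : Fin 6) (h5 : (5:Fin 6) ≠ i) (q : Fin 6 → ℝ) (hq : 0 < q 5) :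
    Dt F54 (pd i F54) q = 0 := by
  rw [Dt_congr (e_pdi i h5 q hq), Dt_zero]

lemma e_DFi (i : Fin 6) (h5 : (5:Fin 6) ≠ i) (q : Fin 6 → ℝ) (hq : 0 < q 5) :
    Dt F54 (pd i F54) =ᶠ[nhds q] fun _ => (0:ℝ) := by
  filter_upwards [ev_pos q hq] with q' h using DFi i h5 q' h

lemma DDFi (i : Fin 6) (h5 : (5:Fin 6) ≠ i) (q : Fin 6 → ℝ) (hq : 0 < q 5) :
    Dt F54 (Dt F54 (pd i F54)) q = 0 := by
  rw [Dt_congr (e_DFi i h5 q hq), Dt_zero]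

/-- The ODE `y⁽⁵⁾ = (y⁽⁴⁾)^{5/4}` satisfies the three Wünschmann conditions at every
point with `y₄ > 0`. -/
theorem stmt14 (p : Fin 6 → ℝ) (hp : 0 < p 5) :
    Wuensch1 F54 p ∧ Wuensch2 F54 p ∧ Wuensch3 F54 p := by
  have hF4 := pd5_F54 p hp
  have hF3 := pdi_F54 4 (by decide) p hp
  have hF2 := pdi_F54 3 (by decide) p hp
  have hF1 := pdi_F54 2 (by decide) p hp
  have hFy := pdi_F54 1 (by decide) p hp
  have hDF4 := DF4 p hp
  have hDDF4 := DDF4 p hp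
  have hDF3 := DFi 4 (by decide) p hp
  have hDF2 := DFi 3 (by decide) p hp
  have hDF1 := DFi 2 (by decide) p hp
  have hDDF3 := DDFi 4 (by decide) p hp
  have hDDF2 := DDFi 3 (by decide) p hp
  have key : ∀ n : ℕ, (p 5) ^ ((n:ℝ)/4) = ((p 5) ^ ((1:ℝ)/4)) ^ n := by
    intro n
    rw [show ((n:ℝ)/4) = (1/4) * n by ring, Real.rpow_mul hp.le, Real.rpow_natCast]
  have ha2 : (p 5) ^ ((1:ℝ)/2) = ((p 5) ^ ((1:ℝ)/4)) ^ (2:ℕ) := by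
    rw [show (1:ℝ)/2 = ((2:ℕ):ℝ)/4 by norm_num]; exact key 2
  have ha3 : (p 5) ^ ((3:ℝ)/4) = ((p 5) ^ ((1:ℝ)/4)) ^ (3:ℕ) := by
    rw [show (3:ℝ)/4 = ((3:ℕ):ℝ)/4 by norm_num]; exact key 3
  refine ⟨?_, ?_, ?_⟩
  · unfold Wuensch1
    rw [hDDF4, hDF3, hF2, hF4, hDF4, hF3, ha2, ha3]
    ring
  · unfold Wuensch2
    rw [hDDF3, hDF2, hDF4, hF1, hF3, hF4, hDF3, hF2, ha2]
    ring
  · unfold Wuensch3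
    rw [hDDF2, hDF1, hDF3, hDF4, hF2, hF3, hF4, hDF2, hF1, hFy, ha2]
    ring
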